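/- Let R = ⊕_{p≥0} R_p be a commutative ℕ-graded ring and for a ∈ ℤ set F^aR := ⊕_{p≤a} R_p. Let y₁,…,yₙ ∈ R be elements of the form yᵢ = xᵢ + (element of F^{kᵢ−1}R), where xᵢ ∈ R_{kᵢ} is homogeneous of degree kᵢ. Suppose x₁,…,xₙ is an R-regular sequence in every order (i.e. every permutation of x₁,…,xₙ is an R-regular sequence). If r₁,…,r_l ∈ R (with l ≤ n) and z := r₁y₁ + ⋯ + r_l y_l ∈ F^aR for some a ∈ ℤ, then the homogeneous component of z of degree a lies in the ideal (x₁,…,x_l). -/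

import Mathlib

/-!
Write `z = ∑ rᵢ yᵢ` with `rᵢ ∈ F^{a+N-kᵢ}` and induct on `N`. For `N = 0` the degree-`a`
component of `z` is that of `∑ rᵢ xᵢ`, which lies in the homogeneous ideal `(x₁, …, x_l)`.
For `N > 0`, the top components `tᵢ` of the `rᵢ` satisfy `∑ tᵢ xᵢ = z_{a+N} = 0`. Since the `xᵢ`
form a regular sequence, this syzygy is Koszul: `t = M x` for an alternating matrix `M`, which
may be taken homogeneous of the matching degrees. Replacing `r` by `r - M y` does not change `z`,
since `yᵀ M y = 0`, and lowers `N` by one.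
-/

/-- A sequence (given as a list) `a₁, …, aₙ` in a commutative ring `A` is `A`-regular if for
each `i`, `aᵢ` is not a zero divisor on `A ⧸ (a₁, …, a_{i-1})`. -/
def IsRegularSeq {A : Type*} [CommRing A] (l : List A) : Prop :=
  ∀ (i : ℕ) (h : i < l.length), ∀ x : A,
    l.get ⟨i, h⟩ * x ∈ Ideal.span {y | y ∈ l.take i} →
      x ∈ Ideal.span {y | y ∈ l.take i}

/-- `Fmem 𝒜 a r` says that `r ∈ F^aR = ⊕_{p ≤ a} R_p`: all homogeneous components of `r`
of degree `> a` vanish. -/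
def Fmem {R : Type*} [CommRing R] (𝒜 : ℕ → AddSubgroup R) [GradedRing 𝒜] (a : ℤ)
    (r : R) : Prop :=
  ∀ p : ℕ, a < (p : ℤ) → (DirectSum.decompose 𝒜 r p : R) = 0

open DirectSum Matrix

section Filtration

variable {R : Type*} [CommRing R] {𝒜 : ℕ → AddSubgroup R} [GradedRing 𝒜] {a b : ℤ} {u v : R}

theorem Fmem.mono (hab : a ≤ b) (hu : Fmem 𝒜 a u) : Fmem 𝒜 b u :=
  fun p hp => hu p (hab.trans_lt hp)

theorem Fmem.sub (hu : Fmem 𝒜 a u) (hv : Fmem 𝒜 a v) : Fmem 𝒜 a (u - v) := by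
  intro p hp
  rw [decompose_sub, DirectSum.sub_apply, AddSubgroup.coe_sub, hu p hp, hv p hp, sub_zero]

theorem Fmem.sum {ι : Type*} (s : Finset ι) {f : ι → R} (hf : ∀ i ∈ s, Fmem 𝒜 a (f i)) :
    Fmem 𝒜 a (∑ i ∈ s, f i) := by
  intro p hp
  rw [decompose_sum, DFinsupp.finsetSum_apply, AddSubgroup.val_finsetSum]
  exact Finset.sum_eq_zero fun i hi => hf i hi p hp

theorem Fmem.mul (hu : Fmem 𝒜 a u) (hv : Fmem 𝒜 b v) : Fmem 𝒜 (a + b) (u * v) := by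
  classical
  intro p hp
  rw [decompose_mul, coe_mul_apply]
  refine Finset.sum_eq_zero fun ⟨q, s⟩ hqs => ?_
  have hqs : q + s = p := (Finset.mem_filter.mp hqs).2
  by_cases hq : a < q
  · rw [hu q hq, zero_mul]
  · rw [hv s (by omega), mul_zero]

theorem fmem_of_mem {k : ℕ} (hu : u ∈ 𝒜 k) : Fmem 𝒜 k u :=
  fun _ hp => decompose_of_mem_ne 𝒜 hu (by omega)

theorem Fmem.eq_zero_of_neg (hu : Fmem 𝒜 a u) (ha : a < 0) : u = 0 :=
  (decompose 𝒜).injective <| by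
    ext p
    rw [hu p (by omega), decompose_zero]
    rfl

theorem Fmem.sub_decompose_toNat (hu : Fmem 𝒜 a u) :
    Fmem 𝒜 (a - 1) (u - decompose 𝒜 u a.toNat) := by
  intro p hp
  rw [decompose_sub, DirectSum.sub_apply, AddSubgroup.coe_sub]
  rcases eq_or_ne p a.toNat with rfl | hpa
  · rw [decompose_of_mem_same 𝒜 (SetLike.coe_mem _), sub_self]
  · rw [hu p (by omega), decompose_of_mem_ne 𝒜 (SetLike.coe_mem _) hpa.symm, sub_self]

theorem exists_fmem (u : R) : ∃ c : ℕ, Fmem 𝒜 c u := by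
  classical
  refine ⟨(decompose 𝒜 u).support.sup id, fun p hp => ?_⟩
  have hp : p ∉ (decompose 𝒜 u).support := fun hmem => by
    have : p ≤ (decompose 𝒜 u).support.sup id := Finset.le_sup (f := id) hmem
    omega
  rw [DFinsupp.notMem_support_iff.mp hp]
  rfl

end Filtration

section RegularSequence

variable {R : Type*} [CommRing R]

theorem IsRegularSeq.take {l : List R} (hl : IsRegularSeq l) (m : ℕ) :
    IsRegularSeq (l.take m) := by
  intro i hi t ht
  have him : min i m = i := min_eq_left (by simp at hi; omega)
  rw [List.take_take, him] at ht ⊢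
  exact hl i (by simp at hi; omega) t (by simpa using ht)

theorem IsRegularSeq.ofFn_castLE {n m : ℕ} {v : Fin n → R} (hv : IsRegularSeq (List.ofFn v))
    (h : m ≤ n) : IsRegularSeq (List.ofFn fun i : Fin m => v (Fin.castLE h i)) := by
  have := hv.take m
  rwa [← Fin.ofFn_take_eq_take_ofFn h] at this

theorem IsRegularSeq.mem_span_of_last_mul_mem {m : ℕ} {v : Fin (m + 1) → R}
    (hv : IsRegularSeq (List.ofFn v)) {t : R}
    (ht : v (Fin.last m) * t ∈ Ideal.span (Set.range fun i : Fin m => v i.castSucc)) :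
    t ∈ Ideal.span (Set.range fun i : Fin m => v i.castSucc) := by
  have hspan : Ideal.span {y | y ∈ (List.ofFn v).take m} =
      Ideal.span (Set.range fun i : Fin m => v i.castSucc) := by
    rw [← Fin.ofFn_take_eq_take_ofFn (Nat.le_succ m)]
    congr 1
    ext y
    simp [List.mem_ofFn', Fin.init]
  have hlast : (List.ofFn v).get ⟨m, by simp⟩ = v (Fin.last m) := by
    rw [List.get_ofFn]; rfl
  rw [← hspan] at ht ⊢
  exact hv m _ t (hlast ▸ ht)

end RegularSequence

section Koszul

variable {R : Type*} [CommRing R]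

-- The vanishing diagonal does not follow from antisymmetry in characteristic 2.
def Matrix.IsAlternating {ι : Type*} (M : Matrix ι ι R) : Prop :=
  (∀ i, M i i = 0) ∧ ∀ i j, M j i = -M i j

theorem Matrix.IsAlternating.mulVec_dotProduct_self {ι : Type*} [Fintype ι]
    {M : Matrix ι ι R} (hM : M.IsAlternating) (w : ι → R) : M *ᵥ w ⬝ᵥ w = 0 := by
  have hpairs : ∑ p : ι × ι, M p.1 p.2 * w p.2 * w p.1 = 0 := by
    refine Finset.sum_ninvolution Prod.swap (fun p => ?_) (fun p hp hswap => ?_)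
      (fun _ => Finset.mem_univ _) Prod.swap_swap
    · rw [Prod.fst_swap, Prod.snd_swap, hM.2 p.1 p.2]
      ring
    · obtain ⟨i, j⟩ := p
      obtain rfl : j = i := congrArg Prod.fst hswap
      exact absurd (by rw [hM.1 j, zero_mul, zero_mul]) hp
  rw [Fintype.sum_prod_type] at hpairs
  simpa only [dotProduct, mulVec, Finset.sum_mul] using hpairs

theorem IsRegularSeq.exists_isAlternating_of_dotProduct_eq_zero :
    ∀ {m : ℕ} {v c : Fin m → R}, IsRegularSeq (List.ofFn v) → c ⬝ᵥ v = 0 →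
      ∃ M : Matrix (Fin m) (Fin m) R, M.IsAlternating ∧ c = M *ᵥ v
  | 0, _, _, _, _ => ⟨0, ⟨fun i => i.elim0, fun i => i.elim0⟩, funext fun i => i.elim0⟩
  | m + 1, v, c, hv, hc => by
    set v' : Fin m → R := fun i => v i.castSucc
    have hsplit : c ⬝ᵥ v = ∑ i, c i.castSucc * v' i + c (Fin.last m) * v (Fin.last m) :=
      Fin.sum_univ_castSucc _
    have hlast : c (Fin.last m) ∈ Ideal.span (Set.range v') := by
      refine hv.mem_span_of_last_mul_mem ?_
      have : v (Fin.last m) * c (Fin.last m) = -∑ i, c i.castSucc * v' i := by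
        linear_combination hc - hsplit
      rw [this]
      exact neg_mem <| Ideal.sum_mem _ fun i _ =>
        Ideal.mul_mem_left _ _ (Ideal.subset_span ⟨i, rfl⟩)
    obtain ⟨d, hd⟩ := (Submodule.mem_span_range_iff_exists_fun R).mp hlast
    set c' : Fin m → R := fun i => c i.castSucc + d i * v (Fin.last m)
    have hc' : c' ⬝ᵥ v' = 0 := by
      have : c' ⬝ᵥ v' = ∑ i, c i.castSucc * v' i + c (Fin.last m) * v (Fin.last m) := by
        simp only [c', dotProduct, add_mul, Finset.sum_add_distrib, ← hd, smul_eq_mul,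
          Finset.sum_mul]
        congr 1
        exact Finset.sum_congr rfl fun i _ => by ring
      rw [this, ← hsplit, hc]
    have hv' : IsRegularSeq (List.ofFn v') := hv.ofFn_castLE m.le_succ
    obtain ⟨M', hM', hcM'⟩ := exists_isAlternating_of_dotProduct_eq_zero hv' hc'
    -- border `M'` by the row `d` and the column `-d`
    refine ⟨fun i j => Fin.lastCases (Fin.lastCases 0 d j)
        (fun i' => Fin.lastCases (-d i') (M' i') j) i,
      ⟨fun i => ?_, fun i j => ?_⟩, funext fun i => ?_⟩
    · induction i using Fin.lastCases <;> simp [hM'.1]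
    · induction i using Fin.lastCases <;> induction j using Fin.lastCases <;>
        simp only [Fin.lastCases_castSucc, Fin.lastCases_last, neg_zero, neg_neg]
      exact hM'.2 _ _
    · induction i using Fin.lastCases with
      | last => simp [mulVec, dotProduct, Fin.sum_univ_castSucc, ← hd, v']
      | cast i =>
        simp only [mulVec, dotProduct, Fin.sum_univ_castSucc, Fin.lastCases_castSucc,
          Fin.lastCases_last]
        have := congrFun hcM' i
        simp only [c', mulVec, dotProduct] at this
        linear_combination this

end Koszul

section Graded

variable {R : Type*} [CommRing R] {𝒜 : ℕ → AddSubgroup R} [GradedRing 𝒜]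
  {m : ℕ} {x : Fin m → R} {k : Fin m → ℕ}

theorem coe_decompose_dotProduct_of_mem (hx : ∀ i, x i ∈ 𝒜 (k i)) (c : Fin m → R) (q : ℕ) :
    (decompose 𝒜 (c ⬝ᵥ x) q : R) =
      ∑ i, if k i ≤ q then (decompose 𝒜 (c i) (q - k i) : R) * x i else 0 := by
  classical
  rw [dotProduct, decompose_sum, DFinsupp.finsetSum_apply, AddSubgroup.val_finsetSum]
  exact Finset.sum_congr rfl fun i _ => coe_decompose_mul_of_right_mem 𝒜 q (hx i)

theorem IsRegularSeq.exists_isAlternating_fmem_of_dotProduct_eq_zero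
    (hreg : IsRegularSeq (List.ofFn x)) (hx : ∀ i, x i ∈ 𝒜 (k i)) {d : ℕ} {t : Fin m → R}
    (ht : ∀ i, t i ∈ 𝒜 (d - k i)) (ht0 : ∀ i, d < k i → t i = 0) (hsyz : t ⬝ᵥ x = 0) :
    ∃ M : Matrix (Fin m) (Fin m) R, M.IsAlternating ∧
      (∀ i j, Fmem 𝒜 ((d : ℤ) - k i - k j) (M i j)) ∧ t = M *ᵥ x := by
  classical
  obtain ⟨M₀, hM₀, htM₀⟩ := hreg.exists_isAlternating_of_dotProduct_eq_zero hsyz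
  refine ⟨Matrix.of fun i j =>
      if k i + k j ≤ d then decompose 𝒜 (M₀ i j) (d - k i - k j) else 0,
    ⟨fun i => ?_, fun i j => ?_⟩, fun i j => ?_, funext fun i => ?_⟩ <;>
    simp only [Matrix.of_apply]
  · rw [hM₀.1 i, decompose_zero]
    split_ifs <;> rfl
  · rw [add_comm (k j), Nat.sub_right_comm d (k j), hM₀.2 i j, decompose_neg]
    split_ifs
    · rw [DFinsupp.neg_apply, AddSubgroup.coe_neg]
    · rw [neg_zero]
  · split_ifs with hij
    · exact (fmem_of_mem (SetLike.coe_mem _)).mono (by omega)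
    · exact fun p _ => by simp
  · by_cases hi : k i ≤ d
    · rw [← decompose_of_mem_same 𝒜 (ht i), htM₀]
      simp only [mulVec, Matrix.of_apply]
      rw [coe_decompose_dotProduct_of_mem hx, dotProduct]
      refine Finset.sum_congr rfl fun j _ => ?_
      rw [Nat.sub_sub]
      split_ifs <;> first | rfl | omega | rw [zero_mul]
    · rw [ht0 i (by omega)]
      simp only [mulVec, dotProduct, Matrix.of_apply]
      refine (Finset.sum_eq_zero fun j _ => ?_).symm
      simp [show ¬ k i + k j ≤ d by omega]

end Graded

section Reduction

variable {R : Type*} [CommRing R] {𝒜 : ℕ → AddSubgroup R} [GradedRing 𝒜]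
  {m : ℕ} {x y : Fin m → R} {k : Fin m → ℕ}

theorem fmem_dotProduct_sub (hxy : ∀ i, Fmem 𝒜 ((k i : ℤ) - 1) (y i - x i)) {b : ℤ}
    {r : Fin m → R} (hr : ∀ i, Fmem 𝒜 (b - k i) (r i)) : Fmem 𝒜 (b - 1) (r ⬝ᵥ (y - x)) :=
  Fmem.sum _ fun i _ => ((hr i).mul (hxy i)).mono (by omega)

theorem coe_decompose_dotProduct_eq_of_fmem_sub (hxy : ∀ i, Fmem 𝒜 ((k i : ℤ) - 1) (y i - x i))
    {b : ℕ} {r : Fin m → R} (hr : ∀ i, Fmem 𝒜 ((b : ℤ) - k i) (r i)) :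
    (decompose 𝒜 (r ⬝ᵥ y) b : R) = decompose 𝒜 (r ⬝ᵥ x) b := by
  rw [← add_sub_cancel (r ⬝ᵥ x) (r ⬝ᵥ y), ← dotProduct_sub, decompose_add, DirectSum.add_apply,
    AddSubgroup.coe_add, fmem_dotProduct_sub hxy hr b (by omega), add_zero]

theorem exists_fmem_dotProduct_eq (hreg : IsRegularSeq (List.ofFn x)) (hx : ∀ i, x i ∈ 𝒜 (k i))
    (hxy : ∀ i, Fmem 𝒜 ((k i : ℤ) - 1) (y i - x i)) {b : ℕ} {r : Fin m → R}
    (hr : ∀ i, Fmem 𝒜 ((b : ℤ) - k i) (r i)) (hz : Fmem 𝒜 ((b : ℤ) - 1) (r ⬝ᵥ y)) :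
    ∃ r' : Fin m → R, (∀ i, Fmem 𝒜 ((b : ℤ) - 1 - k i) (r' i)) ∧ r' ⬝ᵥ y = r ⬝ᵥ y := by
  classical
  set t : Fin m → R := fun i => decompose 𝒜 (r i) (b - k i)
  have ht0 : ∀ i, b < k i → t i = 0 := fun i hi => by
    simp only [t, (hr i).eq_zero_of_neg (by omega), decompose_zero, DirectSum.zero_apply,
      ZeroMemClass.coe_zero]
  -- the top-degree part of `r ⬝ᵥ y` is `t ⬝ᵥ x`, and it vanishes
  have hsyz : t ⬝ᵥ x = 0 := by
    rw [← hz b (by omega), coe_decompose_dotProduct_eq_of_fmem_sub hxy hr,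
      coe_decompose_dotProduct_of_mem hx, dotProduct]
    refine Finset.sum_congr rfl fun i _ => ?_
    split_ifs with hi
    · rfl
    · rw [ht0 i (by omega), zero_mul]
  obtain ⟨M, hM, hMdeg, htM⟩ := hreg.exists_isAlternating_fmem_of_dotProduct_eq_zero hx
    (fun i => SetLike.coe_mem _) ht0 hsyz
  refine ⟨r - M *ᵥ y, fun i => ?_, by rw [sub_dotProduct, hM.mulVec_dotProduct_self, sub_zero]⟩
  have hsplit : r - M *ᵥ y = (r - t) - M *ᵥ (y - x) := by
    rw [mulVec_sub, ← htM]
    abel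
  rw [hsplit]
  refine Fmem.sub ?_ ((fmem_dotProduct_sub hxy (hMdeg i)).mono (by omega))
  have := (hr i).sub_decompose_toNat
  rwa [show ((b : ℤ) - k i).toNat = b - k i by omega, sub_right_comm] at this

/-- `N` is the excess of the degrees of the coefficients over what the degree `a` allows. -/
theorem coe_decompose_dotProduct_mem_span (hreg : IsRegularSeq (List.ofFn x))
    (hx : ∀ i, x i ∈ 𝒜 (k i)) (hxy : ∀ i, Fmem 𝒜 ((k i : ℤ) - 1) (y i - x i)) {a : ℕ} :
    ∀ (N : ℕ) {r : Fin m → R}, (∀ i, Fmem 𝒜 ((a : ℤ) + N - k i) (r i)) →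
      Fmem 𝒜 a (r ⬝ᵥ y) → (decompose 𝒜 (r ⬝ᵥ y) a : R) ∈ Ideal.span (Set.range x)
  | 0, r, hr, _ => by
    rw [coe_decompose_dotProduct_eq_of_fmem_sub hxy (by simpa using hr)]
    have hspan : (Ideal.span (Set.range x)).IsHomogeneous 𝒜 :=
      Ideal.homogeneous_span 𝒜 _ (by rintro _ ⟨i, rfl⟩; exact ⟨k i, hx i⟩)
    refine hspan.mem_iff.mp (Ideal.sum_mem _ fun i _ => ?_) a
    exact Ideal.mul_mem_left _ _ (Ideal.subset_span ⟨i, rfl⟩)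
  | N + 1, r, hr, hz => by
    obtain ⟨r', hr', hr'y⟩ := exists_fmem_dotProduct_eq (b := a + N + 1) hreg hx hxy
      (fun i => (hr i).mono (by push_cast; omega)) (hz.mono (by omega))
    rw [← hr'y] at hz ⊢
    exact coe_decompose_dotProduct_mem_span hreg hx hxy N
      (fun i => (hr' i).mono (by push_cast; omega)) hz

end Reduction

theorem stmt_4 {R : Type*} [CommRing R] (𝒜 : ℕ → AddSubgroup R) [GradedRing 𝒜]
    (n : ℕ) (x y : Fin n → R) (k : Fin n → ℕ)
    (hx : ∀ i, x i ∈ 𝒜 (k i))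
    (hxy : ∀ i, Fmem 𝒜 ((k i : ℤ) - 1) (y i - x i))
    (hreg : ∀ l : List R, l.Perm (List.ofFn x) → IsRegularSeq l)
    (l : ℕ) (hl : l ≤ n) (r : Fin l → R) (a : ℤ)
    (hz : Fmem 𝒜 a (∑ i : Fin l, r i * y (Fin.castLE hl i))) :
    ∀ p : ℕ, (p : ℤ) = a →
      (DirectSum.decompose 𝒜 (∑ i : Fin l, r i * y (Fin.castLE hl i)) p : R) ∈
        Ideal.span (Set.range fun i : Fin l => x (Fin.castLE hl i)) := by
  rintro p rfl
  choose c hc using fun i => exists_fmem (𝒜 := 𝒜) (r i)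
  obtain ⟨N, hN⟩ := Finite.exists_le fun i => c i + k (Fin.castLE hl i)
  have hreg' := (hreg _ (List.Perm.refl _)).ofFn_castLE hl
  exact coe_decompose_dotProduct_mem_span hreg' (fun _ => hx _) (fun _ => hxy _) N
    (fun i => (hc i).mono (by have := hN i; omega)) hz
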